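/- For all real x with 0 < x < 1, 2·(arcsin x / x) + (arctan x / x) < 3 + ((5π − 12)/π) · x³ · arctan x. -/

import Mathlib

/-! Multiplied by `x`, the inequality reads `2 arcsin x + arctan x < 3x + K x⁴ arctan x` with
`K = (5π - 12)/π`, and `K` is exactly the constant making this an equality at `x = 1`.
On `[0, 9/10]` and `[9/10, 97/100]` it reduces to polynomial inequalities, using Taylor bounds for
`arctan`, a quintic bound for `arcsin` near `0`, and `arcsin x ≤ π/2 - √(1 - x²)` (which is
`sin θ ≤ θ` at `θ = arccos x`) away from `0`. On `[97/100, 1]` the difference of the two sides is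
strictly decreasing, since the derivative `2/√(1 - x²)` of `2 arcsin x` dominates, and it vanishes
at `1`. -/

open Real Set

lemma sub_pow_three_div_three_le_arctan {x : ℝ} (hx : 0 ≤ x) : x - x ^ 3 / 3 ≤ arctan x := by
  refine image_le_of_deriv_right_le_deriv_boundary (a := 0) (b := x)
    (f := fun y => y - y ^ 3 / 3) (f' := fun y => 1 - y ^ 2) (B' := fun y => 1 / (1 + y ^ 2))
    (by fun_prop) (fun y _ => ?_) (by simp) continuous_arctan.continuousOn
    (fun y _ => (hasDerivAt_arctan y).hasDerivWithinAt) (fun y _ => ?_) ⟨hx, le_rfl⟩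
  · exact (((hasDerivAt_id y).sub ((hasDerivAt_pow 3 y).div_const 3)).congr_deriv
      (by simp)).hasDerivWithinAt
  · rw [le_div_iff₀ (by positivity)]
    nlinarith [sq_nonneg (y ^ 2)]

lemma arctan_le_sub_add_pow_five_div_five {x : ℝ} (hx : 0 ≤ x) :
    arctan x ≤ x - x ^ 3 / 3 + x ^ 5 / 5 := by
  refine image_le_of_deriv_right_le_deriv_boundary (a := 0) (b := x)
    (f' := fun y => 1 / (1 + y ^ 2)) (B := fun y => y - y ^ 3 / 3 + y ^ 5 / 5)
    (B' := fun y => 1 - y ^ 2 + y ^ 4) continuous_arctan.continuousOn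
    (fun y _ => (hasDerivAt_arctan y).hasDerivWithinAt) (by simp) (by fun_prop)
    (fun y _ => ?_) (fun y _ => ?_) ⟨hx, le_rfl⟩
  · exact ((((hasDerivAt_id y).sub ((hasDerivAt_pow 3 y).div_const 3)).add
      ((hasDerivAt_pow 5 y).div_const 5)).congr_deriv (by simp)).hasDerivWithinAt
  · rw [div_le_iff₀ (by positivity)]
    nlinarith [sq_nonneg (y ^ 3)]

lemma arcsin_le_pi_div_two_sub_sqrt (x : ℝ) : arcsin x ≤ π / 2 - √(1 - x ^ 2) := by
  have h := sin_le (arccos_nonneg x)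
  rw [sin_arccos, arccos_eq_pi_div_two_sub_arcsin] at h
  linarith

lemma one_le_sq_mul_one_sub {u : ℝ} (hu : 0 ≤ u) (hu' : u ≤ 81 / 100) :
    1 ≤ (1 + u / 2 + 3 / 2 * u ^ 2) ^ 2 * (1 - u) := by
  have h : 0 ≤ 81 / 100 - u := by linarith
  nlinarith [mul_nonneg h (sq_nonneg u), mul_nonneg h hu, mul_nonneg hu (sq_nonneg u),
    mul_nonneg (mul_nonneg h hu) (sq_nonneg u), mul_nonneg (mul_nonneg h hu) hu]

lemma arcsin_le_of_le_nine_tenths {x : ℝ} (hx : 0 ≤ x) (hx' : x ≤ 9 / 10) :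
    arcsin x ≤ x + x ^ 3 / 6 + 3 / 10 * x ^ 5 := by
  refine image_le_of_deriv_right_le_deriv_boundary (a := 0) (b := 9 / 10)
    (f' := fun y => 1 / √(1 - y ^ 2)) (B := fun y => y + y ^ 3 / 6 + 3 / 10 * y ^ 5)
    (B' := fun y => 1 + y ^ 2 / 2 + 3 / 2 * y ^ 4) continuous_arcsin.continuousOn
    (fun y hy => ?_) (by simp) (by fun_prop) (fun y _ => ?_) (fun y hy => ?_) ⟨hx, hx'⟩
  · exact (hasDerivAt_arcsin (by linarith [hy.1]) (by linarith [hy.2])).hasDerivWithinAt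
  · exact ((((hasDerivAt_id y).add ((hasDerivAt_pow 3 y).div_const 6)).add
      ((hasDerivAt_pow 5 y).const_mul (3 / 10))).congr_deriv (by simp; ring)).hasDerivWithinAt
  · obtain ⟨hy0, hy9⟩ := hy
    have hs : √(1 - y ^ 2) ^ 2 = 1 - y ^ 2 := sq_sqrt (by nlinarith)
    have hs0 : 0 < √(1 - y ^ 2) := sqrt_pos.mpr (by nlinarith)
    have hsq : 1 ≤ ((1 + y ^ 2 / 2 + 3 / 2 * y ^ 4) * √(1 - y ^ 2)) ^ 2 := by
      rw [mul_pow, hs]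
      convert one_le_sq_mul_one_sub (sq_nonneg y) (by nlinarith) using 2
      ring
    rw [div_le_iff₀ hs0]
    nlinarith [mul_pos (by positivity : (0 : ℝ) < 1 + y ^ 2 / 2 + 3 / 2 * y ^ 4) hs0]

lemma five_mul_pi_sub_twelve_div_pi_gt : 1.17 < (5 * π - 12) / π := by
  rw [lt_div_iff₀ pi_pos]; linarith [pi_gt_d2]

lemma five_mul_pi_sub_twelve_div_pi_lt : (5 * π - 12) / π < 1.2 := by
  rw [div_lt_iff₀ pi_pos]; linarith [pi_lt_d2]

lemma mul_pow_four_sub_le_mul_pow_four_arctan {x : ℝ} (hx0 : 0 ≤ x) (hx1 : x ≤ 1) :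
    1.17 * x ^ 4 * (x - x ^ 3 / 3) ≤ (5 * π - 12) / π * x ^ 4 * arctan x := by
  have hx3 : 0 ≤ x - x ^ 3 / 3 := by nlinarith [pow_le_one₀ hx0 hx1 (n := 2)]
  have := mul_le_mul five_mul_pi_sub_twelve_div_pi_gt.le
    (sub_pow_three_div_three_le_arctan hx0) hx3 (by linarith [five_mul_pi_sub_twelve_div_pi_gt])
  nlinarith [pow_nonneg hx0 4]

lemma two_mul_arcsin_add_arctan_lt_of_le_nine_tenths {x : ℝ} (hx : 0 < x) (hx' : x ≤ 9 / 10) :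
    2 * arcsin x + arctan x < 3 * x + (5 * π - 12) / π * x ^ 4 * arctan x :=
  calc 2 * arcsin x + arctan x ≤ 3 * x + 4 / 5 * x ^ 5 := by
        linarith [arcsin_le_of_le_nine_tenths hx.le hx',
          arctan_le_sub_add_pow_five_div_five hx.le]
    _ < 3 * x + 1.17 * x ^ 4 * (x - x ^ 3 / 3) := by
        have hx2 : x ^ 2 ≤ 81 / 100 := by nlinarith
        nlinarith [pow_pos hx 5, mul_le_mul_of_nonneg_left hx2 (pow_pos hx 5).le]
    _ ≤ _ := by linarith [mul_pow_four_sub_le_mul_pow_four_arctan hx.le (by linarith)]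

lemma two_mul_arcsin_add_arctan_lt_of_mem_Icc {x : ℝ} (hx : 9 / 10 ≤ x) (hx' : x ≤ 97 / 100) :
    2 * arcsin x + arctan x < 3 * x + (5 * π - 12) / π * x ^ 4 * arctan x :=
  have hx0 : 0 ≤ x := by linarith
  calc 2 * arcsin x + arctan x ≤ π - 2 * √(1 - x ^ 2) + (x - x ^ 3 / 3 + x ^ 5 / 5) := by
        linarith [arcsin_le_pi_div_two_sub_sqrt x, arctan_le_sub_add_pow_five_div_five hx0]
    _ < 3 * x + 1.17 * x ^ 4 * (x - x ^ 3 / 3) := by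
        have hs : √(1 - x ^ 2) ^ 2 = 1 - x ^ 2 := sq_sqrt (by nlinarith)
        have hs0 := sqrt_nonneg (1 - x ^ 2)
        -- the chord of the concave function `√(1 - x²)` over `[9/10, 97/100]`
        have hchord : 0.243 + 2.75 * (0.97 - x) ≤ √(1 - x ^ 2) := by
          nlinarith [sq_nonneg (√(1 - x ^ 2) - (0.243 + 2.75 * (0.97 - x)))]
        have hb : 0 ≤ (x - 9 / 10) * (97 / 100 - x) := by nlinarith
        nlinarith [pi_lt_d2, mul_nonneg hb (sq_nonneg x),
          mul_nonneg (mul_nonneg hb (sq_nonneg x)) (sq_nonneg x)]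
    _ ≤ _ := by linarith [mul_pow_four_sub_le_mul_pow_four_arctan hx0 (by linarith)]

lemma three_add_mul_sub_two_div_sqrt_sub_lt_zero {y : ℝ} (hy : 97 / 100 < y) (hy1 : y < 1) :
    3 + (5 * π - 12) / π * (4 * y ^ 3 * arctan y + y ^ 4 / (1 + y ^ 2))
      - 2 / √(1 - y ^ 2) - 1 / (1 + y ^ 2) < 0 := by
  have harctan : 4 * y ^ 3 * arctan y ≤ π := by
    have h1 : arctan y ≤ π / 4 := arctan_one ▸ arctan_strictMono.monotone hy1.le
    have h2 : y ^ 3 ≤ 1 := pow_le_one₀ (by linarith) hy1.le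
    nlinarith [arctan_nonneg.mpr (by linarith : 0 ≤ y)]
  have hquot : y ^ 4 / (1 + y ^ 2) ≤ 1 / 2 := by
    have hy2 : y ^ 2 ≤ 1 := by nlinarith
    rw [div_le_iff₀ (by positivity)]
    nlinarith [mul_le_mul_of_nonneg_left hy2 (sq_nonneg y)]
  have hsqrt : √(1 - y ^ 2) < 1 / 4 := by
    rw [sqrt_lt' (by norm_num)]; nlinarith
  have hinv : 8 < 2 / √(1 - y ^ 2) := by
    rw [lt_div_iff₀ (sqrt_pos.mpr (by nlinarith))]; linarith
  have hK := mul_le_mul five_mul_pi_sub_twelve_div_pi_lt.le (add_le_add harctan hquot)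
    (by positivity) (by norm_num)
  nlinarith [pi_lt_d2, div_nonneg zero_le_one (by positivity : (0 : ℝ) ≤ 1 + y ^ 2)]

lemma two_mul_arcsin_add_arctan_lt_of_ge {x : ℝ} (hx : 97 / 100 ≤ x) (hx1 : x < 1) :
    2 * arcsin x + arctan x < 3 * x + (5 * π - 12) / π * x ^ 4 * arctan x := by
  set K := (5 * π - 12) / π with hK
  let F : ℝ → ℝ := fun y => 3 * y + K * y ^ 4 * arctan y - 2 * arcsin y - arctan y
  have hF1 : F 1 = 0 := by
    simp only [F, hK, arcsin_one, arctan_one, one_pow]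
    field_simp
    ring
  have hanti : StrictAntiOn F (Icc (97 / 100) 1) := by
    refine strictAntiOn_of_hasDerivWithinAt_neg (convex_Icc _ _) (by fun_prop)
      (f' := fun y => 3 + K * (4 * y ^ 3 * arctan y + y ^ 4 / (1 + y ^ 2))
        - 2 / √(1 - y ^ 2) - 1 / (1 + y ^ 2)) (fun y hy => ?_) (fun y hy => ?_)
    all_goals rw [interior_Icc] at hy
    · have hpow : HasDerivAt (fun t : ℝ => t ^ 4) (4 * y ^ 3) y := by
        simpa using hasDerivAt_pow 4 y
      refine ((((hasDerivAt_id y).const_mul 3).add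
        ((hpow.const_mul K).mul (hasDerivAt_arctan y))).sub
        ((hasDerivAt_arcsin (by linarith [hy.1]) hy.2.ne).const_mul 2)).sub
        (hasDerivAt_arctan y) |>.congr_deriv ?_ |>.hasDerivWithinAt
      ring
    · exact three_add_mul_sub_two_div_sqrt_sub_lt_zero hy.1 hy.2
  have hF := hanti ⟨hx, hx1.le⟩ ⟨by norm_num, le_rfl⟩ hx1
  simp only [hF1, F] at hF
  linarith

lemma two_mul_arcsin_add_arctan_lt {x : ℝ} (h1 : 0 < x) (h2 : x < 1) :
    2 * arcsin x + arctan x < 3 * x + (5 * π - 12) / π * x ^ 4 * arctan x := by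
  rcases le_or_gt x (9 / 10) with hA | hA
  · exact two_mul_arcsin_add_arctan_lt_of_le_nine_tenths h1 hA
  rcases le_or_gt x (97 / 100) with hM | hB
  · exact two_mul_arcsin_add_arctan_lt_of_mem_Icc hA.le hM
  · exact two_mul_arcsin_add_arctan_lt_of_ge hB.le h2

theorem stmt1 (x : ℝ) (h1 : 0 < x) (h2 : x < 1) :
    2 * (arcsin x / x) + arctan x / x < 3 + ((5*π - 12)/π) * x^3 * arctan x :=
  calc 2 * (arcsin x / x) + arctan x / x = (2 * arcsin x + arctan x) / x := by ring
    _ < (3 * x + (5 * π - 12) / π * x ^ 4 * arctan x) / x :=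
        div_lt_div_of_pos_right (two_mul_arcsin_add_arctan_lt h1 h2) h1
    _ = _ := by field_simp
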